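/- arXiv:1805.09429 — 6 statements merged into one kernel-verified Lean document; each statement's English description precedes it below -/
import Mathlib

section
/- Let U be a neighborhood of 0 and let P : U → ℝ be a map such that for every x₀ ∈ U, P(x₀) = x(2τ), where x is a solution on [0,2τ] of the controlled system with x(0) = x₀. Then P(0) = 0 and P is differentiable at 0 with P'(0) = e^{λτ}·(e^{λτ} + ελτ). -/
/-!
Write `f s = λ s + r(s)` with `|r(s)| ≤ η |s|` for `|s| ≤ δ`. A Grönwall bootstrap, first on
`[0, τ]` and then on `[τ, 2τ]`, where the delayed velocity is `ẋ(t - τ) = f(x(t - τ))` and hence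
already controlled, keeps a solution starting at a small `x₀` within `C |x₀|` of `0`. There the
remainder is at most `η C |x₀|`, so by Grönwall again the solution stays within `O(η |x₀|)` of
`x₀ y`, where `y` solves the linearised equation by the method of steps and
`y(2τ) = e^{λτ}(e^{λτ} + ελτ)`. Letting `η → 0` gives the derivative.
-/

/-- A solution on `[0,2τ]` of the ODFC system based on a delayed velocity term
(with the control switched on, on `[τ,2τ)`), with initial value `x₀`. -/
def IsSolVelOn (f : ℝ → ℝ) (ε τ x₀ : ℝ) (x : ℝ → ℝ) : Prop :=
  ContinuousOn x (Set.Icc 0 (2 * τ)) ∧ x 0 = x₀ ∧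
  (∀ t ∈ Set.Ico (0 : ℝ) τ, HasDerivWithinAt x (f (x t)) (Set.Ici t) t) ∧
  (∀ t ∈ Set.Ico τ (2 * τ),
      HasDerivWithinAt x (f (x t) + ε * derivWithin x (Set.Ici (t - τ)) (t - τ))
        (Set.Ici t) t)

open Set Real Filter Topology

lemma exists_abs_sub_mul_le_of_hasDerivAt {f : ℝ → ℝ} {lam η : ℝ} (hf : HasDerivAt f lam 0)
    (hf0 : f 0 = 0) (hη : 0 < η) : ∃ δ > 0, ∀ s, |s| ≤ δ → |f s - lam * s| ≤ η * |s| := by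
  obtain ⟨r, hr, hball⟩ := Metric.eventually_nhds_iff.1 ((hasDerivAt_iff_isLittleO.1 hf).def hη)
  refine ⟨r / 2, half_pos hr, fun s hs => ?_⟩
  have hsr : dist s 0 < r := by rw [Real.dist_eq, sub_zero]; linarith
  simpa [hf0, mul_comm] using hball hsr

lemma ContinuousOn.forall_lt_of_first_exit {g : ℝ → ℝ} {a b δ : ℝ} (hg : ContinuousOn g (Icc a b))
    (hexit : ∀ c ∈ Icc a b, (∀ t ∈ Ico a c, g t < δ) → g c < δ) : ∀ t ∈ Icc a b, g t < δ := by
  by_contra! h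
  obtain ⟨t₀, ht₀, hδt₀⟩ := h
  set S := Icc a b ∩ g ⁻¹' Ici δ
  have hS : IsCompact S := isCompact_Icc.of_isClosed_subset
    (hg.preimage_isClosed_of_isClosed isClosed_Icc isClosed_Ici) inter_subset_left
  obtain ⟨hc, hδc⟩ : sInf S ∈ S := hS.sInf_mem ⟨t₀, ht₀, hδt₀⟩
  refine (hexit _ hc fun t ht => lt_of_not_ge fun hδt => ht.2.not_ge ?_).not_ge hδc
  exact csInf_le hS.bddBelow ⟨⟨ht.1, ht.2.le.trans hc.2⟩, hδt⟩

/-- The Grönwall bound itself keeps `x` in the region `|x| ≤ δ` where the estimate holds. -/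
lemma abs_le_gronwallBound_of_local_bound {x x' : ℝ → ℝ} {a b L M r δ : ℝ} (hL : 0 ≤ L)
    (hM : 0 ≤ M) (hx : ContinuousOn x (Icc a b))
    (hx' : ∀ t ∈ Ico a b, HasDerivWithinAt x (x' t) (Ici t) t)
    (bound : ∀ t ∈ Ico a b, |x t| ≤ δ → |x' t| ≤ L * |x t| + M)
    (ha : |x a| ≤ r) (hsmall : gronwallBound r L M (b - a) < δ) :
    ∀ t ∈ Icc a b, |x t| ≤ gronwallBound r L M (t - a) := by
  have gronwall : ∀ c ∈ Icc a b, (∀ t ∈ Ico a c, |x t| ≤ δ) →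
      ∀ t ∈ Icc a c, |x t| ≤ gronwallBound r L M (t - a) := fun c hc hδ =>
    norm_le_gronwallBound_of_norm_deriv_right_le (hx.mono (Icc_subset_Icc_right hc.2))
      (fun t ht => hx' t ⟨ht.1, ht.2.trans_le hc.2⟩) ha
      (fun t ht => bound t ⟨ht.1, ht.2.trans_le hc.2⟩ (hδ t ht))
  have hlt : ∀ t ∈ Icc a b, |x t| < δ :=
    (continuous_abs.comp_continuousOn hx).forall_lt_of_first_exit fun c hc hbefore =>
      (gronwall c hc (fun t ht => (hbefore t ht).le) c ⟨hc.1, le_rfl⟩).trans_lt <|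
        (gronwallBound_mono ((abs_nonneg _).trans ha) hM hL (by linarith [hc.2])).trans_lt hsmall
  intro t ht
  exact gronwall b ⟨ht.1.trans ht.2, le_rfl⟩ (fun s hs => (hlt s (Ico_subset_Icc_self hs)).le) t ht

lemma abs_le_gronwallBound_of_hasDerivWithinAt_mul_add {w e : ℝ → ℝ} {a b K F r : ℝ}
    (hK : 0 ≤ K) (hw : ContinuousOn w (Icc a b))
    (hw' : ∀ t ∈ Ico a b, HasDerivWithinAt w (K * w t + e t) (Ici t) t)
    (he : ∀ t ∈ Ico a b, |e t| ≤ F) (ha : |w a| ≤ r) :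
    ∀ t ∈ Icc a b, |w t| ≤ gronwallBound r K F (t - a) :=
  norm_le_gronwallBound_of_norm_deriv_right_le hw hw' ha fun t ht =>
    calc |K * w t + e t| ≤ |K * w t| + |e t| := abs_add_le _ _
      _ ≤ K * |w t| + F := by rw [abs_mul, abs_of_nonneg hK]; linarith [he t ht]

/-- The solution with initial value `1` of the linearisation `ẏ(t) = λ y(t) + ε(t) ẏ(t - τ)` of the
controlled system at `0`, on `[0, 2τ]`. -/
noncomputable def odfcLinearSol (lam ε τ t : ℝ) : ℝ :=
  if t ≤ τ then exp (lam * t) else exp (lam * (t - τ)) * (exp (lam * τ) + ε * lam * (t - τ))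

namespace odfcLinearSol

variable {lam ε τ t : ℝ}

lemma eq_of_le (h : t ≤ τ) : odfcLinearSol lam ε τ t = exp (lam * t) := if_pos h

lemma eq_of_ge (h : τ ≤ t) :
    odfcLinearSol lam ε τ t = exp (lam * (t - τ)) * (exp (lam * τ) + ε * lam * (t - τ)) := by
  rcases h.eq_or_lt with rfl | h
  · simp [odfcLinearSol]
  · exact if_neg h.not_ge

lemma continuous : Continuous (odfcLinearSol lam ε τ) :=
  Continuous.if_le (by fun_prop) (by fun_prop) continuous_id continuous_const
    fun t ht => by simp [ht]

lemma hasDerivWithinAt_of_lt (ht : t < τ) :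
    HasDerivWithinAt (odfcLinearSol lam ε τ) (lam * odfcLinearSol lam ε τ t) (Ici t) t := by
  have hexp : HasDerivAt (fun s => exp (lam * s)) (lam * exp (lam * t)) t := by
    simpa [mul_comm] using ((hasDerivAt_id t).const_mul lam).exp
  rw [eq_of_le ht.le]
  refine hexp.hasDerivWithinAt.congr_of_eventuallyEq ?_ (eq_of_le ht.le)
  filter_upwards [nhdsWithin_le_nhds (gt_mem_nhds ht)] with s hs using eq_of_le hs.le

lemma hasDerivWithinAt_of_ge (h₁ : τ ≤ t) (h₂ : t ≤ 2 * τ) :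
    HasDerivWithinAt (odfcLinearSol lam ε τ)
      (lam * odfcLinearSol lam ε τ t + ε * (lam * odfcLinearSol lam ε τ (t - τ))) (Ici t) t := by
  have hexp : HasDerivAt (fun s => exp (lam * (s - τ))) (lam * exp (lam * (t - τ))) t := by
    simpa [mul_comm] using (((hasDerivAt_id t).sub_const τ).const_mul lam).exp
  have hlin : HasDerivAt (fun s => exp (lam * τ) + ε * lam * (s - τ)) (ε * lam) t := by
    simpa using (((hasDerivAt_id t).sub_const τ).const_mul (ε * lam)).const_add (exp (lam * τ))
  rw [eq_of_ge h₁, eq_of_le (by linarith : t - τ ≤ τ)]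
  refine ((hexp.mul hlin).hasDerivWithinAt.congr (fun s hs => eq_of_ge (h₁.trans hs))
    (eq_of_ge h₁)).congr_deriv ?_
  ring

end odfcLinearSol

namespace IsSolVelOn

variable {f : ℝ → ℝ} {ε τ x₀ : ℝ} {x : ℝ → ℝ}

lemma hasDerivWithinAt_delayed (hx : IsSolVelOn f ε τ x₀ x) :
    ∀ t ∈ Ico τ (2 * τ), HasDerivWithinAt x (f (x t) + ε * f (x (t - τ))) (Ici t) t := by
  intro t ht
  have hmem : t - τ ∈ Ico 0 τ := ⟨by linarith [ht.1], by linarith [ht.2]⟩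
  simpa only [((hx.2.2.1 _ hmem).derivWithin (uniqueDiffWithinAt_Ici _))] using hx.2.2.2 t ht

lemma abs_le_of_abs_le_mul {L δ : ℝ} (hx : IsSolVelOn f ε τ x₀ x) (hτ : 0 ≤ τ) (hL : 0 < L)
    (hf : ∀ s, |s| ≤ δ → |f s| ≤ L * |s|)
    (hsmall : |x₀| * (exp (L * τ) ^ 2 * (1 + |ε|)) < δ) :
    ∀ t ∈ Icc 0 (2 * τ), |x t| ≤ |x₀| * (exp (L * τ) ^ 2 * (1 + |ε|)) := by
  have hdelayed := hx.hasDerivWithinAt_delayed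
  obtain ⟨hcont, hx0, hd1, -⟩ := hx
  set E := exp (L * τ)
  have hE : 1 ≤ E := one_le_exp (by positivity)
  have hx₀ : 0 ≤ |x₀| := abs_nonneg _
  have hR₁ : |x₀| * E ≤ |x₀| * (E ^ 2 * (1 + |ε|)) := by
    gcongr; nlinarith [abs_nonneg ε]
  have first : ∀ t ∈ Icc 0 τ, |x t| ≤ |x₀| * E := by
    have := abs_le_gronwallBound_of_local_bound (r := |x₀|) hL.le le_rfl
      (hcont.mono (Icc_subset_Icc_right (by linarith))) hd1 (fun t _ h => by simpa using hf _ h)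
      (by rw [hx0]) (by rw [sub_zero, gronwallBound_ε0]; exact hR₁.trans_lt hsmall)
    intro t ht
    refine (this t ht).trans ?_
    rw [sub_zero, gronwallBound_ε0]
    exact mul_le_mul_of_nonneg_left (exp_le_exp.2 (mul_le_mul_of_nonneg_left ht.2 hL.le)) hx₀
  set M := |ε| * (L * (|x₀| * E))
  have hG : gronwallBound (|x₀| * E) L M τ ≤ |x₀| * (E ^ 2 * (1 + |ε|)) := by
    have hML : M / L = |ε| * (|x₀| * E) := by simp only [M]; field_simp
    rw [gronwallBound_of_K_ne_0 hL.ne', hML]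
    nlinarith [abs_nonneg ε, mul_nonneg hx₀ (abs_nonneg ε)]
  have second := abs_le_gronwallBound_of_local_bound hL.le (by positivity)
    (hcont.mono (Icc_subset_Icc_left hτ)) hdelayed (fun t ht h => ?_)
    (first τ ⟨hτ, le_rfl⟩) ((gronwallBound_mono (by positivity) (by positivity) hL.le
      (by linarith)).trans_lt (hG.trans_lt hsmall))
  · intro t ht
    rcases le_total t τ with h | h
    · exact (first t ⟨ht.1, h⟩).trans hR₁
    · refine (second t ⟨h, ht.2⟩).trans (le_trans ?_ hG)
      exact gronwallBound_mono (by positivity) (by positivity) hL.le (by linarith [ht.2])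
  · have hdelay : |f (x (t - τ))| ≤ L * (|x₀| * E) := by
      have hfirst := first (t - τ) ⟨by linarith [ht.1], by linarith [ht.2]⟩
      exact (hf _ (hfirst.trans (hR₁.trans hsmall.le))).trans (by gcongr)
    calc |f (x t) + ε * f (x (t - τ))| ≤ |f (x t)| + |ε| * |f (x (t - τ))| := by
          rw [← abs_mul]; exact abs_add_le _ _
      _ ≤ L * |x t| + M := add_le_add (hf _ h) (mul_le_mul_of_nonneg_left hdelay (abs_nonneg ε))

lemma abs_sub_linearSol_le_of_mem_Icc {lam F : ℝ} (hx : IsSolVelOn f ε τ x₀ x) (hτ : 0 ≤ τ)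
    (hlam : 0 < lam) (hF : 0 ≤ F) (hremainder : ∀ t ∈ Icc 0 τ, |f (x t) - lam * x t| ≤ F) :
    ∀ t ∈ Icc 0 τ, |x t - x₀ * odfcLinearSol lam ε τ t| ≤ F / lam * (exp (lam * τ) - 1) := by
  obtain ⟨hcont, hx0, hd1, -⟩ := hx
  set w : ℝ → ℝ := fun t => x t - x₀ * odfcLinearSol lam ε τ t
  have hw : ContinuousOn w (Icc 0 τ) := (hcont.mono (Icc_subset_Icc_right (by linarith))).sub
    (continuous_const.mul odfcLinearSol.continuous).continuousOn
  have hw0 : |w 0| ≤ 0 := by simp [w, hx0, odfcLinearSol.eq_of_le hτ]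
  have gronwall := abs_le_gronwallBound_of_hasDerivWithinAt_mul_add hlam.le hw
    (fun t ht =>
      ((hd1 t ht).sub ((odfcLinearSol.hasDerivWithinAt_of_lt ht.2).const_mul x₀)).congr_deriv
        (by ring : _ = lam * w t + (f (x t) - lam * x t)))
    (fun t ht => hremainder t (Ico_subset_Icc_self ht)) hw0
  intro t ht
  calc |w t| ≤ gronwallBound 0 lam F (t - 0) := gronwall t ht
    _ ≤ gronwallBound 0 lam F τ := gronwallBound_mono le_rfl hF hlam.le (by linarith [ht.2])
    _ = F / lam * (exp (lam * τ) - 1) := by simp [gronwallBound_of_K_ne_0 hlam.ne']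

lemma abs_sub_linearSol_le {lam η δ R : ℝ} (hx : IsSolVelOn f ε τ x₀ x) (hτ : 0 ≤ τ)
    (hlam : 0 < lam) (hη : 0 ≤ η) (hf : ∀ s, |s| ≤ δ → |f s - lam * s| ≤ η * |s|)
    (hR : ∀ t ∈ Icc 0 (2 * τ), |x t| ≤ R) (hRδ : R ≤ δ) :
    |x (2 * τ) - x₀ * (exp (lam * τ) * (exp (lam * τ) + ε * lam * τ))| ≤
      η * R * ((exp (lam * τ) - 1) / lam * (exp (lam * τ) + 1 + |ε| * exp (lam * τ))) := by
  set c := odfcLinearSol lam ε τ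
  set w : ℝ → ℝ := fun t => x t - x₀ * c t
  set F := η * R
  have hF : 0 ≤ F := mul_nonneg hη ((abs_nonneg _).trans (hR 0 ⟨le_rfl, by linarith⟩))
  have hremainder : ∀ t ∈ Icc 0 (2 * τ), |f (x t) - lam * x t| ≤ F := fun t ht =>
    (hf _ ((hR t ht).trans hRδ)).trans (mul_le_mul_of_nonneg_left (hR t ht) hη)
  set W := F / lam * (exp (lam * τ) - 1)
  have first : ∀ t ∈ Icc 0 τ, |w t| ≤ W := hx.abs_sub_linearSol_le_of_mem_Icc hτ hlam hF
    fun t ht => hremainder t ⟨ht.1, by linarith [ht.2]⟩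
  have hw : ContinuousOn w (Icc τ (2 * τ)) := (hx.1.mono (Icc_subset_Icc_left hτ)).sub
    (continuous_const.mul odfcLinearSol.continuous).continuousOn
  have second := abs_le_gronwallBound_of_hasDerivWithinAt_mul_add (b := 2 * τ)
    (F := F + |ε| * (F + lam * W)) hlam.le hw (fun t ht =>
      ((hx.hasDerivWithinAt_delayed t ht).sub
        ((odfcLinearSol.hasDerivWithinAt_of_ge ht.1 ht.2.le).const_mul x₀)).congr_deriv
        (by ring : _ = lam * w t + ((f (x t) - lam * x t) +
          ε * ((f (x (t - τ)) - lam * x (t - τ)) + lam * w (t - τ)))))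
    (fun t ht => ?_) (first τ ⟨hτ, le_rfl⟩)
  · have hc : c (2 * τ) = exp (lam * τ) * (exp (lam * τ) + ε * lam * τ) :=
      (odfcLinearSol.eq_of_ge (by linarith)).trans (by ring_nf)
    rw [← hc]
    refine (second (2 * τ) ⟨by linarith, le_rfl⟩).trans (le_of_eq ?_)
    rw [gronwallBound_of_K_ne_0 hlam.ne']
    simp only [W]
    field_simp
    ring_nf
  · have hmem : t - τ ∈ Icc 0 τ := ⟨by linarith [ht.1], by linarith [ht.2]⟩
    have hdelay : |(f (x (t - τ)) - lam * x (t - τ)) + lam * w (t - τ)| ≤ F + lam * W :=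
      calc _ ≤ |f (x (t - τ)) - lam * x (t - τ)| + lam * |w (t - τ)| :=
            (abs_add_le _ _).trans_eq (by rw [abs_mul, abs_of_pos hlam])
        _ ≤ F + lam * W := add_le_add (hremainder _ ⟨hmem.1, by linarith [hmem.2]⟩)
            (mul_le_mul_of_nonneg_left (first _ hmem) hlam.le)
    calc _ ≤ |f (x t) - lam * x t| +
          |ε| * |(f (x (t - τ)) - lam * x (t - τ)) + lam * w (t - τ)| := by
          rw [← abs_mul]; exact abs_add_le _ _
      _ ≤ F + |ε| * (F + lam * W) := add_le_add (hremainder t ⟨by linarith [ht.1], ht.2.le⟩)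
          (mul_le_mul_of_nonneg_left hdelay (abs_nonneg ε))

end IsSolVelOn

lemma eventually_isSolVelOn_abs_sub_le {f : ℝ → ℝ} {lam ε τ c : ℝ} (hf : HasDerivAt f lam 0)
    (hf0 : f 0 = 0) (hlam : 0 < lam) (hτ : 0 < τ) (hc : 0 < c) :
    ∀ᶠ x₀ in 𝓝 0, ∀ x, IsSolVelOn f ε τ x₀ x →
      |x (2 * τ) - x₀ * (exp (lam * τ) * (exp (lam * τ) + ε * lam * τ))| ≤ c * |x₀| := by
  set C := exp (2 * lam * τ) ^ 2 * (1 + |ε|)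
  set D := (exp (lam * τ) - 1) / lam * (exp (lam * τ) + 1 + |ε| * exp (lam * τ))
  have hC : 0 < C := by positivity
  have hD : 0 < D := by
    have : 1 < exp (lam * τ) := one_lt_exp_iff.2 (by positivity)
    exact mul_pos (div_pos (by linarith) hlam) (by positivity)
  set η := min lam (c / (C * D))
  have hη : 0 < η := lt_min hlam (by positivity)
  obtain ⟨δ, hδ, hlin⟩ := exists_abs_sub_mul_le_of_hasDerivAt hf hf0 hη
  filter_upwards [Metric.ball_mem_nhds 0 (div_pos hδ hC)] with x₀ hx₀ x hx
  have hsmall : |x₀| * C < δ := by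
    rw [Metric.mem_ball, Real.dist_eq, sub_zero] at hx₀
    exact (lt_div_iff₀ hC).1 hx₀
  have hsublin : ∀ s, |s| ≤ δ → |f s| ≤ 2 * lam * |s| := fun s hs => by
    have htriangle := abs_sub_abs_le_abs_sub (f s) (lam * s)
    rw [abs_mul, abs_of_pos hlam] at htriangle
    nlinarith [hlin s hs, min_le_left lam (c / (C * D)), abs_nonneg s]
  calc _ ≤ η * (|x₀| * C) * D := hx.abs_sub_linearSol_le hτ.le hlam hη.le hlin
        (hx.abs_le_of_abs_le_mul hτ.le (by positivity) hsublin hsmall) hsmall.le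
    _ ≤ c / (C * D) * (|x₀| * C) * D := by gcongr; exact min_le_right _ _
    _ = c * |x₀| := by field_simp

/-- The period map `P` of the ODFC method based on a delayed velocity term fixes `0`
and has derivative `e^{λτ}·(e^{λτ} + ελτ)` at `0`. -/
theorem odfc_velocity_period_map_derivative
    (f : ℝ → ℝ) (lam ε τ : ℝ)
    (hf : ContDiff ℝ 1 f) (hfeq : f 0 = 0) (hfd : deriv f 0 = lam)
    (hlam : 0 < lam) (hτ : 0 < τ)
    (U : Set ℝ) (hU : U ∈ nhds (0 : ℝ)) (P : ℝ → ℝ)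
    (hP : ∀ x₀ ∈ U, ∃ x : ℝ → ℝ, IsSolVelOn f ε τ x₀ x ∧ P x₀ = x (2 * τ)) :
    P 0 = 0 ∧
    HasDerivAt P (Real.exp (lam * τ) * (Real.exp (lam * τ) + ε * lam * τ)) 0 := by
  have hf' : HasDerivAt f lam 0 := hfd ▸ (hf.differentiable one_ne_zero 0).hasDerivAt
  have hestimate : ∀ c > 0, ∀ᶠ x₀ in 𝓝 0,
      |P x₀ - x₀ * (exp (lam * τ) * (exp (lam * τ) + ε * lam * τ))| ≤ c * |x₀| := by
    intro c hc
    filter_upwards [eventually_isSolVelOn_abs_sub_le hf' hfeq hlam hτ hc, hU] with x₀ hx₀ hx₀U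
    obtain ⟨x, hx, hPx⟩ := hP x₀ hx₀U
    exact hPx ▸ hx₀ x hx
  have hP0 : P 0 = 0 := by simpa using (hestimate 1 one_pos).self_of_nhds
  refine ⟨hP0, hasDerivAt_iff_isLittleO.2 (Asymptotics.isLittleO_iff.2 fun c hc => ?_)⟩
  simpa [hP0, mul_comm] using hestimate c hc
end

section
/- For all λ > 0, τ > 0 and ε ∈ ℝ, the inequality |e^{λτ}·(e^{λτ} + ελτ)| < 1 holds if and only if −2·cosh(λτ)/(λτ) < ε < −2·sinh(λτ)/(λτ). -/
/-- The linearized one-period multiplier of the velocity-based ODFC method has modulus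
less than 1 iff `−2cosh(λτ)/(λτ) < ε < −2sinh(λτ)/(λτ)`. -/
theorem odfc_velocity_multiplier_lt_one_iff
    (lam τ ε : ℝ) (hlam : 0 < lam) (hτ : 0 < τ) :
    |Real.exp (lam * τ) * (Real.exp (lam * τ) + ε * lam * τ)| < 1 ↔
      (-2 * Real.cosh (lam * τ) / (lam * τ) < ε ∧
        ε < -2 * Real.sinh (lam * τ) / (lam * τ)) := by
  have hx : 0 < lam * τ := by positivity
  have he : 0 < Real.exp (lam * τ) := Real.exp_pos _
  have hprod : Real.exp (lam * τ) * Real.exp (-(lam * τ)) = 1 := by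
    rw [← Real.exp_add]; simp
  rw [abs_lt, Real.cosh_eq, Real.sinh_eq, div_lt_iff₀ hx, lt_div_iff₀ hx]
  constructor
  · rintro ⟨h1, h2⟩
    constructor
    · nlinarith
    · nlinarith
  · rintro ⟨h1, h2⟩
    constructor
    · nlinarith
    · nlinarith
end

section
/- For all λ > 0, τ > 0 and ε ∈ ℝ, the inequality |e^{3λτ}·(1 + ετ·(1 − e^{λτ})·e^{−2λτ})| < 1 holds if and only if (e^{3λτ} − 1)/(τ·e^{λτ}(e^{λτ} − 1)) < ε < (e^{3λτ} + 1)/(τ·e^{λτ}(e^{λτ} − 1)). -/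
/-- The linearized one-period multiplier of the states-difference ODFC method has modulus
less than 1 iff `(e^{3λτ}−1)/(τe^{λτ}(e^{λτ}−1)) < ε < (e^{3λτ}+1)/(τe^{λτ}(e^{λτ}−1))`. -/
theorem odfc_states_difference_multiplier_lt_one_iff
    (lam τ ε : ℝ) (hlam : 0 < lam) (hτ : 0 < τ) :
    |Real.exp (3 * lam * τ) *
        (1 + ε * τ * (1 - Real.exp (lam * τ)) * Real.exp (-(2 * lam * τ)))| < 1 ↔
      ((Real.exp (3 * lam * τ) - 1) /
          (τ * Real.exp (lam * τ) * (Real.exp (lam * τ) - 1)) < ε ∧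
        ε < (Real.exp (3 * lam * τ) + 1) /
          (τ * Real.exp (lam * τ) * (Real.exp (lam * τ) - 1))) := by
  set E := Real.exp (lam * τ) with hE
  have hE1 : 1 < E := by
    nlinarith [Real.add_one_le_exp (lam * τ), mul_pos hlam hτ]
  have hEpos : 0 < E := lt_trans one_pos hE1
  have h3 : Real.exp (3 * lam * τ) = E ^ 3 := by
    rw [hE, ← Real.exp_nat_mul]; ring_nf
  have h2 : Real.exp (-(2 * lam * τ)) = E⁻¹ ^ 2 := by
    rw [hE, ← Real.exp_neg, ← Real.exp_nat_mul]; ring_nf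
  have hd : 0 < τ * E * (E - 1) := by
    have : 0 < E - 1 := by linarith
    positivity
  have key : E ^ 3 * (1 + ε * τ * (1 - E) * E⁻¹ ^ 2)
      = E ^ 3 - ε * (τ * E * (E - 1)) := by
    field_simp
    ring
  rw [h3, h2, key, abs_lt, div_lt_iff₀ hd, lt_div_iff₀ hd]
  constructor <;> rintro ⟨ha, hb⟩ <;> constructor <;> nlinarith
end

section
/- Fix λ > 0 and α ∈ (−1,1), and define E : (0,∞) → ℝ by E(τ) = e^{−λτ}·(e^{2λτ} − α)/(λτ), the absolute value of the control gain ε of the delayed-velocity ODFC scheme corresponding to multiplier α. Then E attains a global minimum on (0,∞) at a unique point τ*, and τ* satisfies τ* = (1/λ)·(1 − 2α/(α + e^{2λτ*})). -/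
/-!
In the variable `s = λτ` the gain is `F(s) = (eˢ - α e⁻ˢ) / s`, and `F'(s) = G(s) / s²` with
`G(s) = s (eˢ + α e⁻ˢ) - (eˢ - α e⁻ˢ)`. Since `G'(s) = s (eˢ - α e⁻ˢ) > 0` for `s > 0`,
`G(0) = α - 1 < 0` and `G` grows without bound, `G` has exactly one positive zero `s₀`;
`F` decreases before it and increases after it, so `s₀` is the unique minimiser.
Multiplying `G(s₀) = 0` by `e^{s₀}` gives `s₀ (α + e^{2s₀}) = e^{2s₀} - α`, the stated relation.
-/

open Real Set

namespace OdfcVelocity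

noncomputable def gain (α s : ℝ) : ℝ := (exp s - α * exp (-s)) / s

noncomputable def gainCrit (α s : ℝ) : ℝ :=
  s * (exp s + α * exp (-s)) - (exp s - α * exp (-s))

lemma gain_mul_eq (α lam τ : ℝ) :
    exp (-(lam * τ)) * (exp (2 * lam * τ) - α) / (lam * τ) = gain α (lam * τ) := by
  have h : exp (-(lam * τ)) * exp (2 * lam * τ) = exp (lam * τ) := by
    rw [← exp_add]; ring_nf
  rw [gain, mul_sub, h, mul_comm (exp _) α]

lemma exp_sub_mul_exp_neg_pos {α t : ℝ} (hα : α < 1) (ht : 0 < t) :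
    0 < exp t - α * exp (-t) := by
  have h1 : exp (-t) < 1 := exp_lt_one_iff.2 (neg_lt_zero.2 ht)
  have h2 : 1 < exp t := one_lt_exp_iff.2 ht
  nlinarith [exp_pos (-t)]

lemma hasDerivAt_gainCrit (α t : ℝ) :
    HasDerivAt (gainCrit α) (t * (exp t - α * exp (-t))) t := by
  have he := hasDerivAt_exp t
  have hen : HasDerivAt (fun s => exp (-s)) (-exp (-t)) t := by
    simpa using (hasDerivAt_neg t).exp
  refine (((hasDerivAt_id t).mul (he.add (hen.const_mul α))).sub
    (he.sub (hen.const_mul α))).congr_deriv ?_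
  simp only [id_eq, Pi.add_apply]
  ring

lemma hasDerivAt_gain (α : ℝ) {t : ℝ} (ht : t ≠ 0) :
    HasDerivAt (gain α) (gainCrit α t / t ^ 2) t := by
  have he := hasDerivAt_exp t
  have hen : HasDerivAt (fun s => exp (-s)) (-exp (-t)) t := by
    simpa using (hasDerivAt_neg t).exp
  refine ((he.sub (hen.const_mul α)).div (hasDerivAt_id t) ht).congr_deriv ?_
  simp only [gainCrit, id_eq, Pi.sub_apply]
  field_simp
  ring

lemma gainCrit_zero (α : ℝ) : gainCrit α 0 = α - 1 := by
  simp [gainCrit]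

lemma gainCrit_two_add_abs_pos (α : ℝ) : 0 < gainCrit α (2 + |α|) := by
  set s := 2 + |α|
  have hexp : s + 1 ≤ exp s := add_one_le_exp s
  have hexp_neg : exp (-s) ≤ 1 := exp_le_one_iff.2 (neg_nonpos.2 (by positivity))
  have hαs : -α * exp (-s) ≤ |α| := by
    calc -α * exp (-s) ≤ |α| * exp (-s) := by gcongr; exact neg_le_abs α
      _ ≤ |α| := mul_le_of_le_one_right (abs_nonneg α) hexp_neg
  have hG : gainCrit α s = (s - 1) * exp s + (s + 1) * α * exp (-s) := by
    unfold gainCrit; ring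
  rw [hG]
  nlinarith [abs_nonneg α]

lemma strictMonoOn_gainCrit {α : ℝ} (hα : α < 1) : StrictMonoOn (gainCrit α) (Ici 0) := by
  refine strictMonoOn_of_deriv_pos (convex_Ici 0)
    (fun t _ => (hasDerivAt_gainCrit α t).continuousAt.continuousWithinAt) fun t ht => ?_
  rw [interior_Ici] at ht
  rw [(hasDerivAt_gainCrit α t).deriv]
  exact mul_pos ht (exp_sub_mul_exp_neg_pos hα ht)

lemma exists_gainCrit_eq_zero {α : ℝ} (hα : α < 1) : ∃ s₀ > 0, gainCrit α s₀ = 0 := by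
  have hcont : ContinuousOn (gainCrit α) (Icc 0 (2 + |α|)) :=
    fun t _ => (hasDerivAt_gainCrit α t).continuousAt.continuousWithinAt
  have hsign : gainCrit α 0 < 0 ∧ 0 < gainCrit α (2 + |α|) :=
    ⟨by rw [gainCrit_zero]; linarith, gainCrit_two_add_abs_pos α⟩
  obtain ⟨s₀, hs₀, hG⟩ := intermediate_value_Ioo (by positivity) hcont hsign
  exact ⟨s₀, hs₀.1, hG⟩

section Extremum

variable {α s₀ : ℝ} (hα : α < 1) (hs₀ : 0 < s₀) (hG : gainCrit α s₀ = 0)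
include hα hs₀ hG

lemma strictAntiOn_gain : StrictAntiOn (gain α) (Ioc 0 s₀) := by
  refine strictAntiOn_of_deriv_neg (convex_Ioc 0 s₀)
    (fun t ht => (hasDerivAt_gain α ht.1.ne').continuousAt.continuousWithinAt) fun t ht => ?_
  rw [interior_Ioc] at ht
  rw [(hasDerivAt_gain α ht.1.ne').deriv]
  have hneg : gainCrit α t < 0 :=
    hG ▸ strictMonoOn_gainCrit hα (mem_Ici.2 ht.1.le) (mem_Ici.2 hs₀.le) ht.2
  exact div_neg_of_neg_of_pos hneg (pow_pos ht.1 2)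

lemma strictMonoOn_gain : StrictMonoOn (gain α) (Ici s₀) := by
  refine strictMonoOn_of_deriv_pos (convex_Ici s₀)
    (fun t ht => (hasDerivAt_gain α (hs₀.trans_le ht).ne').continuousAt.continuousWithinAt)
    fun t ht => ?_
  rw [interior_Ici] at ht
  have ht₀ : 0 < t := hs₀.trans ht
  rw [(hasDerivAt_gain α ht₀.ne').deriv]
  have hpos : 0 < gainCrit α t :=
    hG ▸ strictMonoOn_gainCrit hα (mem_Ici.2 hs₀.le) (mem_Ici.2 ht₀.le) ht
  exact div_pos hpos (pow_pos ht₀ 2)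

lemma gain_lt_gain {t : ℝ} (ht : 0 < t) (hne : t ≠ s₀) : gain α s₀ < gain α t := by
  rcases hne.lt_or_gt with hlt | hgt
  · exact strictAntiOn_gain hα hs₀ hG ⟨ht, hlt.le⟩ ⟨hs₀, le_rfl⟩ hlt
  · exact strictMonoOn_gain hα hs₀ hG (mem_Ici.2 le_rfl) hgt.le hgt

end Extremum

lemma eq_one_sub_of_gainCrit_eq_zero {α s : ℝ} (hG : gainCrit α s = 0) :
    s = 1 - 2 * α / (α + exp (2 * s)) := by
  have hexp : exp (2 * s) = exp s * exp s := by rw [← exp_add]; ring_nf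
  have hinv : exp s * exp (-s) = 1 := by rw [← exp_add]; simp
  have key : s * (α + exp (2 * s)) = exp (2 * s) - α := by
    rw [gainCrit] at hG
    rw [hexp]
    linear_combination exp s * hG - (s + 1) * α * hinv
  have hden : α + exp (2 * s) ≠ 0 := fun h0 => by
    rw [h0, mul_zero] at key
    linarith [exp_pos (2 * s)]
  have hfrac : 2 * α / (α + exp (2 * s)) = 1 - s := by
    rw [div_eq_iff hden]
    linear_combination key
  linarith

end OdfcVelocity

open OdfcVelocity in
/-- For the velocity-based ODFC method, the absolute value of the control gain as a
function of the delay, `E(τ) = e^{−λτ}(e^{2λτ} − α)/(λτ)`, attains a global minimum on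
`(0,∞)` at a unique point `τ*`, which satisfies
`τ* = (1/λ)(1 − 2α/(α + e^{2λτ*}))`. -/
theorem odfc_velocity_optimal_delay
    (lam α : ℝ) (hlam : 0 < lam) (hα : α ∈ Set.Ioo (-1 : ℝ) 1)
    (E : ℝ → ℝ)
    (hE : ∀ τ > (0 : ℝ),
      E τ = Real.exp (-(lam * τ)) * (Real.exp (2 * lam * τ) - α) / (lam * τ)) :
    ∃ τs > (0 : ℝ),
      (∀ σ > (0 : ℝ), E τs ≤ E σ) ∧
      (∀ σ > (0 : ℝ), (∀ σ' > (0 : ℝ), E σ ≤ E σ') → σ = τs) ∧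
      τs = (1 / lam) * (1 - 2 * α / (α + Real.exp (2 * lam * τs))) := by
  obtain ⟨s₀, hs₀, hG⟩ := exists_gainCrit_eq_zero hα.2
  have hτs : 0 < s₀ / lam := div_pos hs₀ hlam
  have hscale : lam * (s₀ / lam) = s₀ := mul_div_cancel₀ s₀ hlam.ne'
  have hEgain : ∀ τ > (0 : ℝ), E τ = gain α (lam * τ) := fun τ hτ =>
    (hE τ hτ).trans (gain_mul_eq α lam τ)
  refine ⟨s₀ / lam, hτs, fun σ hσ => ?_, fun σ hσ hmin => ?_, ?_⟩
  · rw [hEgain _ hτs, hEgain σ hσ, hscale]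
    rcases eq_or_ne (lam * σ) s₀ with h | h
    · rw [h]
    · exact (gain_lt_gain hα.2 hs₀ hG (mul_pos hlam hσ) h).le
  · have hle := hmin _ hτs
    rw [hEgain σ hσ, hEgain _ hτs, hscale] at hle
    by_contra hne
    have hne' : lam * σ ≠ s₀ := fun h => hne (by rw [← h, mul_div_cancel_left₀ σ hlam.ne'])
    exact (gain_lt_gain hα.2 hs₀ hG (mul_pos hlam hσ) hne').not_ge hle
  · have h2 : 2 * lam * (s₀ / lam) = 2 * s₀ := by rw [mul_assoc, hscale]
    rw [h2, ← eq_one_sub_of_gainCrit_eq_zero hG, one_div_mul_eq_div]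
end

section
/- Fix λ > 0 and α ∈ (−1,1), and define E : (0,∞) → ℝ by E(τ) = e^{−λτ}·(e^{3λτ} − α)/(τ·(e^{λτ} − 1)), the control gain ε of the delayed-states-difference ODFC scheme corresponding to multiplier α. Then E attains a global minimum on (0,∞) at a unique point τ*, and τ* satisfies τ* = (1/λ)·((e^{2λτ*} − α·e^{−λτ*})·(e^{λτ*} − 1))/(e^{3λτ*} − 2e^{2λτ*} − α·e^{−λτ*} + 2α). -/
/-!
With `x = λτ` the gain is `E τ = λ · g (λτ)`, where `g x = e^{-x}(e^{3x} - α)/(x(e^x - 1))`, so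
everything reduces to `g`. Since `g x ≥ e^x / x`, `g` blows up at `0` and at `∞` and therefore
attains its minimum. The logarithmic derivative
`1 + 3α/(e^{3x} - α) - 1/x - 1/(e^x - 1)` of `g` is strictly increasing: its derivative
`1/x² + e^x/(e^x - 1)² - 9α e^{3x}/(e^{3x} - α)²` is positive because
`9α u²(u - 1)² ≤ (u³ - α)²` for `u = e^x ≥ 1`. Hence `g` has exactly one critical point, and
solving the critical-point equation for `x` gives the formula for `τ*`.
-/

open Real Set Filter Topology

lemma exists_isMinOn_Ioi_of_tendsto {f : ℝ → ℝ} (hf : ContinuousOn f (Ioi 0))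
    (h0 : Tendsto f (𝓝[>] 0) atTop) (hinf : Tendsto f atTop atTop) :
    ∃ x > 0, IsMinOn f (Ioi 0) x := by
  have hcont : Continuous (f ∘ exp) := hf.comp_continuous continuous_exp exp_pos
  have hlim : Tendsto (f ∘ exp) (cocompact ℝ) atTop := by
    rw [cocompact_eq_atBot_atTop]
    exact tendsto_sup.2 ⟨h0.comp tendsto_exp_atBot_nhdsGT, hinf.comp tendsto_exp_atTop⟩
  obtain ⟨y, hy⟩ := hcont.exists_forall_le hlim
  refine ⟨exp y, exp_pos y, fun z (hz : 0 < z) => ?_⟩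
  simpa [exp_log hz] using hy (log z)

lemma forall_le_iff_isMinOn_mul {f g : ℝ → ℝ} {c : ℝ} (hc : 0 < c)
    (hfg : ∀ τ > 0, f τ = c * g (c * τ)) {σ : ℝ} (hσ : 0 < σ) :
    (∀ τ > 0, f σ ≤ f τ) ↔ IsMinOn g (Ioi 0) (c * σ) := by
  constructor
  · intro h y (hy : 0 < y)
    have := h (y / c) (div_pos hy hc)
    rwa [hfg σ hσ, hfg _ (div_pos hy hc), mul_div_cancel₀ y hc.ne',
      mul_le_mul_iff_right₀ hc] at this
  · intro h τ hτ
    rw [hfg σ hσ, hfg τ hτ]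
    exact mul_le_mul_of_nonneg_left (h (mul_pos hc hτ)) hc.le

namespace ODFC

noncomputable def gain (α x : ℝ) : ℝ :=
  exp (-x) * (exp (3 * x) - α) / (x * (exp x - 1))

noncomputable def logGain (α x : ℝ) : ℝ :=
  log (exp (3 * x) - α) - x - log x - log (exp x - 1)

noncomputable def logGainDeriv (α x : ℝ) : ℝ :=
  1 + 3 * α / (exp (3 * x) - α) - 1 / x - 1 / (exp x - 1)

lemma exp_two_mul (x : ℝ) : exp (2 * x) = exp x ^ 2 := by exact_mod_cast exp_nat_mul x 2

lemma exp_three_mul (x : ℝ) : exp (3 * x) = exp x ^ 3 := by exact_mod_cast exp_nat_mul x 3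

lemma exp_sub_one_pos {x : ℝ} (hx : 0 < x) : 0 < exp x - 1 := sub_pos.2 (one_lt_exp_iff.2 hx)

variable {α x : ℝ}

lemma exp_three_mul_sub_pos (hα : α ≤ 1) (hx : 0 < x) : 0 < exp (3 * x) - α := by
  linarith [one_lt_exp_iff.2 (by positivity : 0 < 3 * x)]

lemma mul_gain_mul {lam : ℝ} (hlam : lam ≠ 0) (τ : ℝ) :
    lam * gain α (lam * τ) = exp (-(lam * τ)) * (exp (3 * lam * τ) - α) /
      (τ * (exp (lam * τ) - 1)) := by
  rw [gain, mul_assoc 3, mul_assoc lam, mul_div_assoc', mul_div_mul_left _ _ hlam]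

lemma exp_div_le_gain (hα : α ≤ 1) (hx : 0 < x) : exp x / x ≤ gain α x := by
  have hu : 1 < exp x := one_lt_exp_iff.2 hx
  have hα' : α ≤ exp x ^ 2 := hα.trans (one_le_pow₀ hu.le)
  rw [gain, exp_neg, exp_three_mul, div_le_div_iff₀ hx (mul_pos hx (by linarith))]
  field_simp
  nlinarith

lemma gain_pos (hα : α ≤ 1) (hx : 0 < x) : 0 < gain α x :=
  (div_pos (exp_pos x) hx).trans_le (exp_div_le_gain hα hx)

lemma gain_eq_exp_logGain (hα : α ≤ 1) (hx : 0 < x) : gain α x = exp (logGain α x) := by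
  have hu := exp_sub_one_pos hx
  rw [logGain, exp_sub, exp_sub, exp_sub, exp_log (exp_three_mul_sub_pos hα hx), exp_log hx,
    exp_log hu, gain, exp_neg]
  field_simp

lemma hasDerivAt_exp_three_mul_sub (α x : ℝ) :
    HasDerivAt (fun y => exp (3 * y) - α) (exp (3 * x) * 3) x :=
  (((hasDerivAt_id x).const_mul 3).exp.sub_const α).congr_deriv (by simp)

lemma hasDerivAt_logGain (hα : α ≤ 1) (hx : 0 < x) :
    HasDerivAt (logGain α) (logGainDeriv α x) x := by
  have hv := exp_three_mul_sub_pos hα hx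
  have hu := exp_sub_one_pos hx
  have h3 := hasDerivAt_exp_three_mul_sub α x
  refine ((((h3.log hv.ne').sub (hasDerivAt_id x)).sub (hasDerivAt_log hx.ne')).sub
    (((hasDerivAt_exp x).sub_const 1).log hu.ne')).congr_deriv ?_
  rw [logGainDeriv]
  field_simp
  ring

lemma hasDerivAt_gain (hα : α ≤ 1) (hx : 0 < x) :
    HasDerivAt (gain α) (gain α x * logGainDeriv α x) x := by
  have hexp := (hasDerivAt_logGain hα hx).exp
  rw [← gain_eq_exp_logGain hα hx] at hexp
  exact hexp.congr_of_eventuallyEq <|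
    eventually_of_mem (Ioi_mem_nhds hx) fun y hy => gain_eq_exp_logGain hα hy

lemma continuousOn_gain (hα : α ≤ 1) : ContinuousOn (gain α) (Ioi 0) :=
  fun _ hx => (hasDerivAt_gain hα hx).continuousAt.continuousWithinAt

lemma tendsto_gain_nhdsGT_zero (hα : α ≤ 1) : Tendsto (gain α) (𝓝[>] 0) atTop := by
  refine tendsto_atTop_mono' _ ?_ tendsto_inv_nhdsGT_zero
  filter_upwards [self_mem_nhdsWithin] with x hx
  calc x⁻¹ ≤ exp x / x := by
        rw [inv_eq_one_div]; exact div_le_div_of_nonneg_right (one_le_exp hx.le) hx.le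
    _ ≤ gain α x := exp_div_le_gain hα hx

lemma tendsto_gain_atTop (hα : α ≤ 1) : Tendsto (gain α) atTop atTop := by
  refine tendsto_atTop_mono' _ ?_ (by simpa using tendsto_exp_div_pow_atTop 1)
  filter_upwards [eventually_gt_atTop 0] with x hx using exp_div_le_gain hα hx

lemma sq_mul_le_sq_cube_sub {u : ℝ} (hα : α ≤ 1) (hu : 1 ≤ u) :
    9 * α * (u * (u - 1)) ^ 2 ≤ (u ^ 3 - α) ^ 2 := by
  rcases le_or_gt α 0 with h | h
  · nlinarith [sq_nonneg (u * (u - 1)), sq_nonneg (u ^ 3 - α)]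
  obtain ⟨β, hβ0, rfl⟩ : ∃ β, 0 ≤ β ∧ α = β ^ 2 := ⟨√α, sqrt_nonneg α, (sq_sqrt h.le).symm⟩
  have hβ1 : β ≤ 1 := by nlinarith
  -- `(u³ - β²)² - (3βu(u - 1))²` factors, and both factors are nonnegative.
  have hA : 0 ≤ u ^ 3 - β ^ 2 - 3 * β * u * (u - 1) := by
    nlinarith [mul_nonneg (sub_nonneg.2 hu) (sq_nonneg (u - 1)),
      mul_nonneg (mul_nonneg (sub_nonneg.2 hu) (sub_nonneg.2 hβ1)) (by linarith : (0 : ℝ) ≤ u)]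
  have hB : 0 ≤ u ^ 3 - β ^ 2 + 3 * β * u * (u - 1) := by
    nlinarith [mul_nonneg (mul_nonneg hβ0 (by linarith : (0 : ℝ) ≤ u)) (sub_nonneg.2 hu),
      pow_le_pow_left₀ zero_le_one hu 3]
  nlinarith [mul_nonneg hA hB]

lemma hasDerivAt_logGainDeriv (hα : α ≤ 1) (hx : 0 < x) :
    HasDerivAt (logGainDeriv α)
      (-(9 * α * exp (3 * x) / (exp (3 * x) - α) ^ 2) + 1 / x ^ 2 + exp x / (exp x - 1) ^ 2)
      x := by
  have hv := exp_three_mul_sub_pos hα hx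
  have hu := exp_sub_one_pos hx
  have h3 := hasDerivAt_exp_three_mul_sub α x
  refine ((((hasDerivAt_const x (3 * α)).div h3 hv.ne').const_add 1).sub
    ((hasDerivAt_const x 1).div (hasDerivAt_id x) hx.ne') |>.sub
    ((hasDerivAt_const x 1).div ((hasDerivAt_exp x).sub_const 1) hu.ne')).congr_deriv ?_
  simp only [zero_mul, zero_sub, id_eq, mul_one, one_mul, one_div]
  ring

lemma strictMonoOn_logGainDeriv (hα : α ≤ 1) : StrictMonoOn (logGainDeriv α) (Ioi 0) := by
  refine strictMonoOn_of_hasDerivWithinAt_pos (convex_Ioi 0)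
    (fun x hx => (hasDerivAt_logGainDeriv hα hx).continuousAt.continuousWithinAt)
    (fun x hx => (hasDerivAt_logGainDeriv hα (by simpa using hx)).hasDerivWithinAt)
    (fun x hx => ?_)
  rw [interior_Ioi, mem_Ioi] at hx
  have hu : 1 < exp x := one_lt_exp_iff.2 hx
  have hv := exp_three_mul_sub_pos hα hx
  have key := sq_mul_le_sq_cube_sub hα hu.le
  rw [exp_three_mul] at hv ⊢
  have hcross : 9 * α * exp x ^ 3 / (exp x ^ 3 - α) ^ 2 ≤ exp x / (exp x - 1) ^ 2 := by
    rw [div_le_div_iff₀ (pow_pos hv 2) (pow_pos (by linarith) 2)]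
    nlinarith [exp_pos x]
  have hinv : 0 < 1 / x ^ 2 := by positivity
  linarith

lemma logGainDeriv_eq_zero_of_isMinOn (hα : α ≤ 1) (hx : 0 < x)
    (hmin : IsMinOn (gain α) (Ioi 0) x) : logGainDeriv α x = 0 := by
  have hcrit := (hmin.isLocalMin (Ioi_mem_nhds hx)).hasDerivAt_eq_zero (hasDerivAt_gain hα hx)
  exact (mul_eq_zero.1 hcrit).resolve_left (gain_pos hα hx).ne'

lemma eq_of_isMinOn_gain {y : ℝ} (hα : α ≤ 1) (hx : 0 < x) (hy : 0 < y)
    (hminx : IsMinOn (gain α) (Ioi 0) x) (hminy : IsMinOn (gain α) (Ioi 0) y) : x = y :=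
  (strictMonoOn_logGainDeriv hα).injOn hx hy <| by
    rw [logGainDeriv_eq_zero_of_isMinOn hα hx hminx, logGainDeriv_eq_zero_of_isMinOn hα hy hminy]

lemma eq_div_of_logGainDeriv_eq_zero (hα : α ≤ 1) (hx : 0 < x) (h : logGainDeriv α x = 0) :
    x = (exp (2 * x) - α * exp (-x)) * (exp x - 1) /
      (exp (3 * x) - 2 * exp (2 * x) - α * exp (-x) + 2 * α) := by
  have hu : 1 < exp x := one_lt_exp_iff.2 hx
  have hv := exp_three_mul_sub_pos hα hx
  rw [logGainDeriv, exp_three_mul] at h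
  rw [exp_three_mul] at hv
  rw [exp_three_mul, exp_two_mul, exp_neg]
  set u := exp x
  have hu0 : u - 1 ≠ 0 := by linarith
  field_simp at h
  have hden : (u ^ 3 - 2 * u ^ 2 - α * u⁻¹ + 2 * α) * x = (u ^ 2 - α * u⁻¹) * (u - 1) := by
    field_simp
    linear_combination h
  have hnum : 0 < (u ^ 2 - α * u⁻¹) * (u - 1) := by
    refine mul_pos ?_ (by linarith)
    rw [show u ^ 2 - α * u⁻¹ = (u ^ 3 - α) / u by field_simp]
    positivity
  have hden_ne : u ^ 3 - 2 * u ^ 2 - α * u⁻¹ + 2 * α ≠ 0 := by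
    rintro h0
    rw [h0, zero_mul] at hden
    exact hnum.ne hden
  rw [eq_div_iff hden_ne]
  linear_combination hden

end ODFC

/-- For the states-difference ODFC method, the control gain as a function of the delay,
`E(τ) = e^{−λτ}(e^{3λτ} − α)/(τ(e^{λτ} − 1))`, attains a global minimum on `(0,∞)` at a
unique point `τ*`, which satisfies
`τ* = (1/λ)·((e^{2λτ*} − αe^{−λτ*})(e^{λτ*} − 1))/(e^{3λτ*} − 2e^{2λτ*} − αe^{−λτ*} + 2α)`. -/
theorem odfc_states_difference_optimal_delay
    (lam α : ℝ) (hlam : 0 < lam) (hα : α ∈ Set.Ioo (-1 : ℝ) 1)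
    (E : ℝ → ℝ)
    (hE : ∀ τ > (0 : ℝ),
      E τ = Real.exp (-(lam * τ)) * (Real.exp (3 * lam * τ) - α) /
        (τ * (Real.exp (lam * τ) - 1))) :
    ∃ τs > (0 : ℝ),
      (∀ σ > (0 : ℝ), E τs ≤ E σ) ∧
      (∀ σ > (0 : ℝ), (∀ σ' > (0 : ℝ), E σ ≤ E σ') → σ = τs) ∧
      τs = (1 / lam) *
        ((Real.exp (2 * lam * τs) - α * Real.exp (-(lam * τs))) *
            (Real.exp (lam * τs) - 1)) /
          (Real.exp (3 * lam * τs) - 2 * Real.exp (2 * lam * τs) -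
            α * Real.exp (-(lam * τs)) + 2 * α) := by
  have hα1 : α ≤ 1 := hα.2.le
  have hEgain : ∀ τ > 0, E τ = lam * ODFC.gain α (lam * τ) := fun τ hτ => by
    rw [hE τ hτ, ODFC.mul_gain_mul hlam.ne']
  obtain ⟨x, hx, hmin⟩ := exists_isMinOn_Ioi_of_tendsto (ODFC.continuousOn_gain hα1)
    (ODFC.tendsto_gain_nhdsGT_zero hα1) (ODFC.tendsto_gain_atTop hα1)
  have hscale : lam * (x / lam) = x := mul_div_cancel₀ x hlam.ne'
  refine ⟨x / lam, div_pos hx hlam,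
    (forall_le_iff_isMinOn_mul hlam hEgain (div_pos hx hlam)).2 (by rwa [hscale]),
    fun σ hσ hσmin => ?_, ?_⟩
  · have hσmin' := (forall_le_iff_isMinOn_mul hlam hEgain hσ).1 hσmin
    refine eq_div_of_mul_eq hlam.ne' ?_
    rw [mul_comm]
    exact ODFC.eq_of_isMinOn_gain hα1 (mul_pos hlam hσ) hx hσmin' hmin
  · have hformula := ODFC.eq_div_of_logGainDeriv_eq_zero hα1 hx
      (ODFC.logGainDeriv_eq_zero_of_isMinOn hα1 hx hmin)
    simp only [mul_assoc, hscale]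
    rw [mul_div_assoc, ← hformula, one_div_mul_eq_div]
end

section
/- Let f ∈ C¹(ℝ) with f(0) = 0 and f'(0) = λ, let τ > 0, let U be a neighborhood of 0, and let φ : [0,τ] × U → ℝ satisfy φ(0,x₀) = x₀ and ∂φ/∂t(t,x₀) = f(φ(t,x₀)) for all t ∈ [0,τ] and x₀ ∈ U. Then the map x₀ ↦ φ(τ,x₀) is differentiable at 0 with derivative e^{λτ}. -/
/-
Since `f 0 = 0` and `f' 0 = λ`, near the equilibrium `f y = λ y + o(y)`, and in particular
`|f y| ≤ K |y|`. Grönwall's inequality, applied up to the first time the trajectory could leave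
the region where this bound holds, shows that this never happens for small `x`:
`|φ t x| ≤ e^{Kτ} |x|` on `[0, τ]`. So `t ↦ φ t x` solves the linearised equation `ẏ = λ y` up
to an error `o(|x|)` uniformly on `[0, τ]`, and comparing it with the exact solution `e^{λt} x`
(Grönwall once more) gives `φ τ x = e^{λτ} x + o(x)`.
-/

open Set Real Filter Topology Asymptotics

section Gronwall

variable {E : Type*} [NormedAddCommGroup E] [NormedSpace ℝ E]

theorem gronwallBound_zero_left_eq_mul (K ε x : ℝ) :
    gronwallBound 0 K ε x = ε * gronwallBound 0 K 1 x := by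
  unfold gronwallBound
  split_ifs <;> ring

theorem HasDerivWithinAt.hasDerivWithinAt_Ici_of_Icc {g : ℝ → E} {g' : E} {a b t : ℝ}
    (h : HasDerivWithinAt g g' (Icc a b) t) (ht : t ∈ Ico a b) :
    HasDerivWithinAt g g' (Ici t) t :=
  h.mono_of_mem_nhdsWithin (Icc_mem_nhdsGE_of_mem ht)

theorem ContinuousOn.forall_Icc_lt_of_forall_Ico_le_imp_lt {g : ℝ → ℝ} {a b δ : ℝ}
    (hg : ContinuousOn g (Icc a b))
    (h : ∀ c ∈ Icc a b, (∀ t ∈ Ico a c, g t ≤ δ) → g c < δ) :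
    ∀ t ∈ Icc a b, g t < δ := by
  by_contra! hexit
  set S := Icc a b ∩ g ⁻¹' Ici δ
  have hS : IsClosed S := hg.preimage_isClosed_of_isClosed isClosed_Icc isClosed_Ici
  have hSbdd : BddBelow S := ⟨a, fun s hs => hs.1.1⟩
  obtain ⟨hc, hgc⟩ : sInf S ∈ S := hS.csInf_mem hexit hSbdd
  refine (h _ hc fun t ht => ?_).not_ge hgc
  by_contra! hgt
  exact ht.2.not_ge (csInf_le hSbdd ⟨⟨ht.1, ht.2.le.trans hc.2⟩, hgt.le⟩)

theorem norm_le_mul_exp_of_norm_deriv_right_le_near_zero {y y' : ℝ → E} {a b K δ : ℝ}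
    (hy : ContinuousOn y (Icc a b)) (hy' : ∀ t ∈ Ico a b, HasDerivWithinAt y (y' t) (Ici t) t)
    (hK : 0 ≤ K) (bound : ∀ t ∈ Ico a b, ‖y t‖ ≤ δ → ‖y' t‖ ≤ K * ‖y t‖)
    (hsmall : ‖y a‖ * exp (K * (b - a)) < δ) :
    ∀ t ∈ Icc a b, ‖y t‖ ≤ ‖y a‖ * exp (K * (t - a)) := by
  have gronwall : ∀ c ∈ Icc a b, (∀ t ∈ Ico a c, ‖y t‖ ≤ δ) →
      ∀ t ∈ Icc a c, ‖y t‖ ≤ ‖y a‖ * exp (K * (t - a)) := by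
    intro c hc hδ t ht
    have hsub : Icc a c ⊆ Icc a b := Icc_subset_Icc_right hc.2
    simpa [gronwallBound_ε0] using norm_le_gronwallBound_of_norm_deriv_right_le (K := K) (ε := 0)
      (hy.mono hsub)
      (fun s hs => hy' s ⟨hs.1, hs.2.trans_le hc.2⟩) le_rfl
      (fun s hs => by simpa using bound s ⟨hs.1, hs.2.trans_le hc.2⟩ (hδ s hs)) t ht
  have hlt : ∀ t ∈ Icc a b, ‖y t‖ < δ := by
    refine hy.norm.forall_Icc_lt_of_forall_Ico_le_imp_lt fun c hc hδ => ?_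
    refine (gronwall c hc hδ c (right_mem_Icc.2 hc.1)).trans_lt (lt_of_le_of_lt ?_ hsmall)
    gcongr
    exact hc.2
  intro t ht
  exact gronwall t ht (fun s hs => (hlt s ⟨hs.1, hs.2.le.trans ht.2⟩).le) t
    (right_mem_Icc.2 ht.1)

theorem norm_sub_exp_smul_le_gronwallBound {y y' : ℝ → E} {a b lam M : ℝ}
    (hy : ContinuousOn y (Icc a b)) (hy' : ∀ t ∈ Ico a b, HasDerivWithinAt y (y' t) (Ici t) t)
    (bound : ∀ t ∈ Ico a b, ‖y' t - lam • y t‖ ≤ M) :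
    ∀ t ∈ Icc a b,
      ‖y t - exp (lam * (t - a)) • y a‖ ≤ gronwallBound 0 |lam| M (t - a) := by
  have hexp : ∀ t, HasDerivAt (fun s => exp (lam * (s - a)) • y a)
      (lam • exp (lam * (t - a)) • y a) t := fun t => by
    simpa [smul_smul, mul_comm] using
      (((hasDerivAt_id t).sub_const a).const_mul lam).exp.smul_const (y a)
  intro t ht
  simpa [dist_eq_norm, ← Real.norm_eq_abs] using
    dist_le_of_approx_trajectories_ODE (v := fun _ z => lam • z) (fun _ => lipschitzWith_smul lam)
      hy hy' (by simpa [dist_eq_norm] using bound)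
      (fun s _ => (hexp s).continuousAt.continuousWithinAt) (fun s _ => (hexp s).hasDerivWithinAt)
      (fun _ _ => le_of_eq (dist_self _)) (by simp : dist (y a) _ ≤ 0) t ht

end Gronwall

theorem HasDerivAt.exists_abs_sub_mul_le_of_eq_zero {f : ℝ → ℝ} {lam ε : ℝ}
    (hf : HasDerivAt f lam 0) (h0 : f 0 = 0) (hε : 0 < ε) :
    ∃ δ > 0, ∀ y, |y| ≤ δ → |f y - lam * y| ≤ ε * |y| := by
  rw [hasDerivAt_iff_isLittleO] at hf
  obtain ⟨δ, hδ, hball⟩ := Metric.nhds_basis_closedBall.eventually_iff.1 (hf.def hε)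
  exact ⟨δ, hδ, fun y hy => by rw [mul_comm lam]; simpa [h0] using hball (by simpa using hy)⟩

theorem HasDerivAt.exists_abs_le_mul_of_eq_zero {f : ℝ → ℝ} {lam : ℝ}
    (hf : HasDerivAt f lam 0) (h0 : f 0 = 0) :
    ∃ K > 0, ∃ δ > 0, ∀ y, |y| ≤ δ → |f y| ≤ K * |y| := by
  obtain ⟨K, hK, hbig⟩ := hf.isBigO_sub.exists_pos
  obtain ⟨δ, hδ, hball⟩ := Metric.nhds_basis_closedBall.eventually_iff.1 hbig.bound
  exact ⟨K, hK, δ, hδ, fun y hy => by simpa [h0] using hball (by simpa using hy)⟩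

section Flow

variable {f : ℝ → ℝ} {φ : ℝ → ℝ → ℝ} {τ : ℝ} {U : Set ℝ} {x : ℝ}

theorem abs_flow_le_of_abs_le_mul (hφ0 : ∀ x₀ ∈ U, φ 0 x₀ = x₀)
    (hφ : ∀ x₀ ∈ U, ∀ t ∈ Icc (0 : ℝ) τ,
      HasDerivWithinAt (fun s => φ s x₀) (f (φ t x₀)) (Icc (0 : ℝ) τ) t)
    {K δ : ℝ} (hK : 0 ≤ K) (hgrowth : ∀ y, |y| ≤ δ → |f y| ≤ K * |y|)
    (hx : x ∈ U) (hsmall : |x| * exp (K * τ) < δ) :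
    ∀ t ∈ Icc 0 τ, |φ t x| ≤ |x| * exp (K * τ) := by
  have hbound := norm_le_mul_exp_of_norm_deriv_right_le_near_zero (y := (φ · x))
    (fun t ht => (hφ x hx t ht).continuousWithinAt)
    (fun t ht => (hφ x hx t (Ico_subset_Icc_self ht)).hasDerivWithinAt_Ici_of_Icc ht) hK
    (fun t _ => hgrowth _) (by simpa [hφ0 x hx] using hsmall)
  intro t ht
  calc |φ t x| ≤ |x| * exp (K * t) := by simpa [hφ0 x hx] using hbound t ht
    _ ≤ |x| * exp (K * τ) := by gcongr; exact ht.2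

theorem abs_flow_sub_exp_mul_le (hφ0 : ∀ x₀ ∈ U, φ 0 x₀ = x₀)
    (hφ : ∀ x₀ ∈ U, ∀ t ∈ Icc (0 : ℝ) τ,
      HasDerivWithinAt (fun s => φ s x₀) (f (φ t x₀)) (Icc (0 : ℝ) τ) t)
    {lam M : ℝ} (hτ : 0 ≤ τ) (hx : x ∈ U)
    (bound : ∀ t ∈ Icc 0 τ, |f (φ t x) - lam * φ t x| ≤ M) :
    |φ τ x - exp (lam * τ) * x| ≤ gronwallBound 0 |lam| M τ := by
  simpa [hφ0 x hx] using norm_sub_exp_smul_le_gronwallBound (y := (φ · x))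
    (fun t ht => (hφ x hx t ht).continuousWithinAt)
    (fun t ht => (hφ x hx t (Ico_subset_Icc_self ht)).hasDerivWithinAt_Ici_of_Icc ht)
    (fun t ht => bound t (Ico_subset_Icc_self ht)) τ (right_mem_Icc.2 hτ)

end Flow

/-- The time-`τ` map of the local flow of `ẋ = f(x)`, with `f(0) = 0` and `f'(0) = λ`,
is differentiable at `0` with derivative `e^{λτ}`. -/
theorem flow_time_tau_map_derivative_at_equilibrium
    (f : ℝ → ℝ) (lam τ : ℝ)
    (hf : ContDiff ℝ 1 f) (hfeq : f 0 = 0) (hfd : deriv f 0 = lam) (hτ : 0 < τ)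
    (U : Set ℝ) (hU : U ∈ nhds (0 : ℝ)) (φ : ℝ → ℝ → ℝ)
    (hφ0 : ∀ x₀ ∈ U, φ 0 x₀ = x₀)
    (hφ : ∀ x₀ ∈ U, ∀ t ∈ Set.Icc (0 : ℝ) τ,
      HasDerivWithinAt (fun s => φ s x₀) (f (φ t x₀)) (Set.Icc (0 : ℝ) τ) t) :
    HasDerivAt (fun x₀ => φ τ x₀) (Real.exp (lam * τ)) 0 := by
  have hf0 : HasDerivAt f lam 0 := hfd ▸ (hf.differentiable one_ne_zero 0).hasDerivAt
  obtain ⟨K, hK, δ, hδ, hgrowth⟩ := hf0.exists_abs_le_mul_of_eq_zero hfeq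
  set R := exp (K * τ)
  have hsmall : ∀ r > 0, ∀ᶠ x in 𝓝 (0 : ℝ), |x| * R < r := fun r hr =>
    ((continuous_abs.mul continuous_const).tendsto' 0 0 (by simp)).eventually (gt_mem_nhds hr)
  have hbound : ∀ x ∈ U, |x| * R < δ → ∀ t ∈ Icc 0 τ, |φ t x| ≤ |x| * R :=
    fun x hx => abs_flow_le_of_abs_le_mul hφ0 hφ hK.le hgrowth hx
  have hφτ0 : φ τ 0 = 0 := by
    simpa using hbound 0 (mem_of_mem_nhds hU) (by simpa using hδ) τ (right_mem_Icc.2 hτ.le)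
  rw [hasDerivAt_iff_isLittleO, isLittleO_iff]
  intro c hc
  set G := gronwallBound 0 |lam| 1 τ
  obtain ⟨ε, hε, hεc⟩ := exists_pos_mul_lt hc (R * G)
  obtain ⟨δ₁, hδ₁, hlin⟩ := hf0.exists_abs_sub_mul_le_of_eq_zero hfeq hε
  filter_upwards [hU, hsmall δ hδ, hsmall δ₁ hδ₁] with x hxU hxδ hxδ₁
  have hdev := abs_flow_sub_exp_mul_le hφ0 hφ hτ.le hxU (M := ε * (|x| * R))
    fun t ht => (hlin _ ((hbound x hxU hxδ t ht).trans hxδ₁.le)).trans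
      (by gcongr; exact hbound x hxU hxδ t ht)
  rw [gronwallBound_zero_left_eq_mul] at hdev
  simp only [hφτ0, sub_zero, smul_eq_mul, Real.norm_eq_abs]
  calc |φ τ x - x * exp (lam * τ)| ≤ ε * (|x| * R) * G := by rwa [mul_comm x]
    _ = R * G * ε * |x| := by ring
    _ ≤ c * |x| := by gcongr
end
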